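/- (Main theorem, 3D.) Let D = {x ∈ ℝ³ : x₃ > 0}. Let u : ℝ³ × [0,∞) → ℝ³ be C³ in space up to the boundary and C¹ in time up to the boundary, divergence-free, satisfying the no-slip condition u(x,t) = 0 for x₃ = 0, and suppose the vorticity ω = ∇∧u satisfies ∂ω/∂t + (u·∇)ω − νΔω − (ω·∇)u − G = 0 in the closed half space. Let θ(x₁,x₂,t) = ω(x₁,x₂,0,t) and ψ(x₁,x₂,t) = G(x₁,x₂,0,t). Then θ³ = 0, and on ∂D = ℝ²: ∂θ¹/∂t − 2ν Δ_Γ θ¹ + ν ∂/∂x₁(∇^Γ·θ) − ν (∂³u²/∂𝛎³)|_{∂D} − ψ¹ = 0 and ∂θ²/∂t − 2ν Δ_Γ θ² + ν ∂/∂x₂(∇^Γ·θ) + ν (∂³u¹/∂𝛎³)|_{∂D} − ψ² = 0, where ∂/∂𝛎 = −∂/∂x₃ is the outward normal derivative. In particular the effective viscosity in the boundary dynamics is 2ν, i.e. doubled. -/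

import Mathlib

/-- Partial derivative of a scalar field on `ℝⁿ` in the `i`-th coordinate direction. -/
noncomputable def pd {n : ℕ} (i : Fin n) (f : (Fin n → ℝ) → ℝ) (x : Fin n → ℝ) : ℝ :=
  fderiv ℝ f x (Pi.single i 1)

/-- The curl (vorticity) `ω = ∇ ∧ u` of a vector field on `ℝ³`. -/
noncomputable def curl3 (u : (Fin 3 → ℝ) → Fin 3 → ℝ) (x : Fin 3 → ℝ) : Fin 3 → ℝ :=
  ![pd 1 (fun y => u y 2) x - pd 2 (fun y => u y 1) x,
    pd 2 (fun y => u y 0) x - pd 0 (fun y => u y 2) x,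
    pd 0 (fun y => u y 1) x - pd 1 (fun y => u y 0) x]

/-- The boundary vorticity `θ(x₁,x₂,t) = ω(x₁,x₂,0,t)` as a time-dependent field on
`∂D = ℝ²`. -/
noncomputable def bdryVort (u : (Fin 3 → ℝ) → ℝ → Fin 3 → ℝ) (p : Fin 2 → ℝ) (t : ℝ) :
    Fin 3 → ℝ :=
  curl3 (fun y => u y t) ![p 0, p 1, 0]

/-!
At the wall the no-slip condition kills `u` together with all its tangential derivatives, so
the advection and stretching terms of the vorticity equation vanish there and `θ³ = 0`. What
remains is `∂ₜθ = ν Δω + ψ`, and the only non-tangential part of `Δω`, namely `∂₃²ω`, is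
rewritten through `∇·u = 0`: since the divergence vanishes on the closed half-space, so do
all its derivatives up to the wall, and `∂₃²ω` becomes tangential derivatives of `θ` plus
the normal third derivative of `u`. The tangential Laplacian appears once from `Δω` and once
from `∂₃²ω`, which doubles the viscosity.
-/

open Set

namespace BoundaryVorticity

variable {d : ℕ}

def bdry (k : Fin d) : Set (Fin d → ℝ) := {y | y k = 0}

def halfSpace (k : Fin d) : Set (Fin d → ℝ) := {y | 0 ≤ y k}

noncomputable def divergence (v : (Fin d → ℝ) → Fin d → ℝ) : (Fin d → ℝ) → ℝ :=
  fun y => ∑ i, pd i (fun z => v z i) y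

/-- In `ℝ³`, `curl3 v = (vorticity v 1 2, vorticity v 2 0, vorticity v 0 1)`. -/
noncomputable def vorticity (v : (Fin d → ℝ) → Fin d → ℝ) (a b : Fin d) : (Fin d → ℝ) → ℝ :=
  fun y => pd a (fun z => v z b) y - pd b (fun z => v z a) y

section Calculus

variable {f g : (Fin d → ℝ) → ℝ}

lemma contDiff_pd {n m : WithTop ℕ∞} (hf : ContDiff ℝ n f) (h : m + 1 ≤ n) (i : Fin d) :
    ContDiff ℝ m (pd i f) :=
  (hf.fderiv_right h).clm_apply contDiff_const

lemma pd_add (hf : Differentiable ℝ f) (hg : Differentiable ℝ g) (i : Fin d) :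
    pd i (fun y => f y + g y) = fun y => pd i f y + pd i g y := by
  funext y
  simp [pd, fderiv_fun_add (hf y) (hg y)]

lemma pd_sub (hf : Differentiable ℝ f) (hg : Differentiable ℝ g) (i : Fin d) :
    pd i (fun y => f y - g y) = fun y => pd i f y - pd i g y := by
  funext y
  simp [pd, fderiv_fun_sub (hf y) (hg y)]

lemma pd_neg (f : (Fin d → ℝ) → ℝ) (i : Fin d) :
    pd i (fun y => -f y) = fun y => -pd i f y := by
  funext y
  simp [pd, fderiv_fun_neg]

lemma pd_zero (i : Fin d) : pd i (0 : (Fin d → ℝ) → ℝ) = 0 := by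
  funext y
  simp [pd]

lemma pd_sum {ι : Type*} [Fintype ι] {F : ι → (Fin d → ℝ) → ℝ}
    (hF : ∀ c, Differentiable ℝ (F c)) (i : Fin d) :
    pd i (fun y => ∑ c, F c y) = fun y => ∑ c, pd i (F c) y := by
  funext y
  simp [pd, fderiv_fun_sum fun c _ => hF c y]

lemma pd_comm (hf : ContDiff ℝ 2 f) (i j : Fin d) : pd i (pd j f) = pd j (pd i f) := by
  have hf' : ContDiff ℝ 1 (fderiv ℝ f) := hf.fderiv_right (by norm_num)
  have hpd (a b : Fin d) (x : Fin d → ℝ) :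
      pd a (pd b f) x = fderiv ℝ (fderiv ℝ f) x (Pi.single a 1) (Pi.single b 1) := by
    change fderiv ℝ (fun y => fderiv ℝ f y (Pi.single b 1)) x (Pi.single a 1) = _
    rw [fderiv_clm_apply (hf'.differentiable one_ne_zero x) (differentiableAt_const _)]
    simp
  funext x
  rw [hpd, hpd]
  exact (second_derivative_symmetric (fun y => (hf.differentiable two_ne_zero y).hasFDerivAt)
    ((hf'.differentiable one_ne_zero x).hasFDerivAt) _ _).symm

lemma pd_comp_continuousLinearMap {m n : ℕ} (L : (Fin m → ℝ) →L[ℝ] (Fin n → ℝ))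
    {g : (Fin n → ℝ) → ℝ} (hg : Differentiable ℝ g) {i : Fin m} {i' : Fin n}
    (hL : L (Pi.single i 1) = Pi.single i' 1) :
    pd i (fun q => g (L q)) = fun q => pd i' g (L q) := by
  funext q
  simp [pd, fderiv_fun_comp q (hg _) L.differentiableAt, L.fderiv, hL]

theorem _root_.Set.EqOn.pd_bdry {k i : Fin d} (h : EqOn f 0 (bdry k)) (hf : Differentiable ℝ f)
    (hi : i ≠ k) : EqOn (pd i f) 0 (bdry k) := by
  intro x hx
  have hline : (fun s : ℝ => f (x + s • Pi.single i 1)) = fun _ => 0 := by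
    funext s
    apply h
    simpa [bdry, Pi.single_apply, hi.symm] using hx
  rw [Pi.zero_apply, pd, ← (hf x).lineDeriv_eq_fderiv, lineDeriv, hline, deriv_const]

/-- Unlike on `bdry k`, every derivative vanishes here, also normal ones at the boundary:
the closed half-space is a set of unique differentiability. -/
theorem _root_.Set.EqOn.pd_halfSpace {k : Fin d} (h : EqOn f 0 (halfSpace k))
    (hf : Differentiable ℝ f) (i : Fin d) : EqOn (pd i f) 0 (halfSpace k) := by
  intro x hx
  have hconv : Convex ℝ (halfSpace k) := convex_halfSpace_ge (LinearMap.proj k).isLinear 0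
  have hint : (interior (halfSpace k)).Nonempty := by
    have hopen : IsOpen {y : Fin d → ℝ | 0 < y k} := isOpen_lt continuous_const (continuous_apply k)
    have hsub : {y : Fin d → ℝ | 0 < y k} ⊆ halfSpace k := fun y (hy : 0 < y k) => hy.le
    exact ⟨Pi.single k 1, interior_maximal hsub hopen (by simp)⟩
  rw [Pi.zero_apply, pd, ← (hf x).fderivWithin (uniqueDiffOn_convex hconv hint x hx),
    fderivWithin_congr' h hx]
  simp

end Calculus

section Vorticity

variable {v : (Fin d → ℝ) → Fin d → ℝ}

lemma vorticity_self (a : Fin d) : vorticity v a a = 0 := by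
  funext y
  simp [vorticity]

lemma contDiff_vorticity (hv : ContDiff ℝ 3 v) (a b : Fin d) :
    ContDiff ℝ 2 (vorticity v a b) :=
  (contDiff_pd (contDiff_pi.1 hv b) (by norm_num) a).sub
    (contDiff_pd (contDiff_pi.1 hv a) (by norm_num) b)

lemma pd_pd_vorticity (hv : ContDiff ℝ 3 v) (a c b b' : Fin d) :
    pd a (pd c (vorticity v b b')) =
      fun y => pd a (pd c (pd b (fun z => v z b'))) y - pd a (pd c (pd b' (fun z => v z b))) y := by
  have h2 (j i : Fin d) : ContDiff ℝ 2 (pd i (fun z => v z j)) :=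
    contDiff_pd (contDiff_pi.1 hv j) (by norm_num) i
  have h1 (j i : Fin d) : ContDiff ℝ 1 (pd c (pd i (fun z => v z j))) :=
    contDiff_pd (h2 j i) (by norm_num) c
  unfold vorticity
  rw [pd_sub ((h2 _ _).differentiable two_ne_zero) ((h2 _ _).differentiable two_ne_zero),
    pd_sub ((h1 _ _).differentiable one_ne_zero) ((h1 _ _).differentiable one_ne_zero)]

/-- Both sides reduce to `∂_b ∂_k² v^k`: on the right, `Σ_c ∂_b ∂_c ∂_k v^c = ∂_b ∂_k (∇·v) = 0`
and the terms `∂_b ∂_c² v^k` with `c ≠ k` are tangential derivatives of `v^k = 0`. -/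
theorem pd_pd_vorticity_normal (hv : ContDiff ℝ 3 v) {k b : Fin d} (hb : b ≠ k)
    (hdiv : EqOn (divergence v) 0 (halfSpace k)) (hns : EqOn v 0 (bdry k)) {x : Fin d → ℝ}
    (hx : x ∈ bdry k) :
    pd k (pd k (vorticity v b k)) x =
      ∑ c, pd b (pd c (vorticity v c k)) x - pd k (pd k (pd k (fun z => v z b))) x := by
  have h3 (j : Fin d) : ContDiff ℝ 3 (fun z => v z j) := contDiff_pi.1 hv j
  have h2 (j i : Fin d) : ContDiff ℝ 2 (pd i (fun z => v z j)) :=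
    contDiff_pd (h3 j) (by norm_num) i
  have h1 (j i i' : Fin d) : ContDiff ℝ 1 (pd i' (pd i (fun z => v z j))) :=
    contDiff_pd (h2 j i) (by norm_num) i'
  have hnormal : EqOn (fun z => v z k) 0 (bdry k) := fun y hy => by simp [hns hy]
  have htangential : ∀ c ≠ k, pd b (pd c (pd c (fun z => v z k))) x = 0 := fun c hc =>
    (((hnormal.pd_bdry ((h3 k).differentiable (by norm_num)) hc).pd_bdry
      ((h2 k c).differentiable two_ne_zero) hc).pd_bdry
      ((h1 k c c).differentiable one_ne_zero) hb) hx
  have hdiv2 : ContDiff ℝ 2 (divergence v) := ContDiff.sum fun i _ => h2 i i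
  have hpd_div : pd b (pd k (divergence v)) x = 0 :=
    ((hdiv.pd_halfSpace (hdiv2.differentiable two_ne_zero) k).pd_halfSpace
      ((contDiff_pd hdiv2 (by norm_num) k : ContDiff ℝ 1 _).differentiable one_ne_zero) b)
      (show 0 ≤ x k from hx.ge)
  have hsum : ∑ c, pd b (pd c (pd k (fun z => v z c))) x = pd b (pd k (divergence v)) x := by
    unfold divergence
    rw [pd_sum fun c => (h2 c c).differentiable two_ne_zero,
      pd_sum fun c => (h1 c c k).differentiable one_ne_zero]
    refine Finset.sum_congr rfl fun c _ => ?_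
    rw [pd_comm ((h3 c).of_le (by norm_num)) c k]
  have hlhs : pd k (pd k (pd b (fun z => v z k))) = pd b (pd k (pd k (fun z => v z k))) := by
    rw [pd_comm ((h3 k).of_le (by norm_num)) k b, pd_comm (h2 k k)]
  simp only [pd_pd_vorticity hv]
  rw [Finset.sum_sub_distrib, hsum, hpd_div, hlhs,
    Finset.sum_eq_single k (fun c _ hc => htangential c hc) (by simp)]
  ring

end Vorticity

section Curl

variable {v : (Fin 3 → ℝ) → Fin 3 → ℝ}

lemma curl3_zero_eq_vorticity : (fun y => curl3 v y 0) = vorticity v 1 2 := rfl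

lemma curl3_one_eq_neg_vorticity : (fun y => curl3 v y 1) = fun y => -vorticity v 0 2 y := by
  funext y
  simp [curl3, vorticity]

lemma contDiff_curl3 (hv : ContDiff ℝ 3 v) : ∀ j : Fin 3, ContDiff ℝ 2 (fun y => curl3 v y j)
  | 0 => contDiff_vorticity hv 1 2
  | 1 => curl3_one_eq_neg_vorticity (v := v) ▸ (contDiff_vorticity hv 0 2).neg
  | 2 => contDiff_vorticity hv 0 1

lemma pd_tangential_eq_zero (hv : Differentiable ℝ v) (hns : EqOn v 0 (bdry 2))
    {x : Fin 3 → ℝ} (hx : x ∈ bdry 2) {i : Fin 3} (hi : i ≠ 2) (j : Fin 3) :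
    pd i (fun y => v y j) x = 0 :=
  EqOn.pd_bdry (fun y hy => by simp [hns hy]) (differentiable_pi.1 hv j) hi hx

theorem curl3_two_eq_zero (hv : Differentiable ℝ v) (hns : EqOn v 0 (bdry 2))
    {x : Fin 3 → ℝ} (hx : x ∈ bdry 2) : curl3 v x 2 = 0 := by
  simp [curl3, pd_tangential_eq_zero hv hns hx]

theorem vortex_stretching_eq_zero (hv : Differentiable ℝ v) (hns : EqOn v 0 (bdry 2))
    {x : Fin 3 → ℝ} (hx : x ∈ bdry 2) (j : Fin 3) :
    ∑ i, curl3 v x i * pd i (fun y => v y j) x = 0 := by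
  simp [Fin.sum_univ_three, curl3_two_eq_zero hv hns hx, pd_tangential_eq_zero hv hns hx]

theorem pd_two_pd_two_curl3_zero (hv : ContDiff ℝ 3 v)
    (hdiv : EqOn (divergence v) 0 (halfSpace 2)) (hns : EqOn v 0 (bdry 2)) {x : Fin 3 → ℝ}
    (hx : x ∈ bdry 2) :
    pd 2 (pd 2 (fun y => curl3 v y 0)) x =
      pd 1 (pd 1 (fun y => curl3 v y 0)) x - pd 0 (pd 1 (fun y => curl3 v y 1)) x
        - pd 2 (pd 2 (pd 2 (fun z => v z 1))) x := by
  rw [curl3_zero_eq_vorticity, curl3_one_eq_neg_vorticity, pd_neg, pd_neg,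
    pd_pd_vorticity_normal hv (by decide) hdiv hns hx, Fin.sum_univ_three, vorticity_self,
    pd_zero, pd_zero, Pi.zero_apply, pd_comm (contDiff_vorticity hv 0 2)]
  ring

theorem pd_two_pd_two_curl3_one (hv : ContDiff ℝ 3 v)
    (hdiv : EqOn (divergence v) 0 (halfSpace 2)) (hns : EqOn v 0 (bdry 2)) {x : Fin 3 → ℝ}
    (hx : x ∈ bdry 2) :
    pd 2 (pd 2 (fun y => curl3 v y 1)) x =
      pd 0 (pd 0 (fun y => curl3 v y 1)) x - pd 1 (pd 0 (fun y => curl3 v y 0)) x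
        + pd 2 (pd 2 (pd 2 (fun z => v z 0))) x := by
  rw [curl3_zero_eq_vorticity, curl3_one_eq_neg_vorticity, pd_neg, pd_neg, pd_neg, pd_neg]
  beta_reduce
  rw [pd_pd_vorticity_normal hv (by decide) hdiv hns hx, Fin.sum_univ_three, vorticity_self,
    pd_zero, pd_zero, Pi.zero_apply, pd_comm (contDiff_vorticity hv 1 2)]
  ring

end Curl

noncomputable def bdryEmb : (Fin 2 → ℝ) →L[ℝ] (Fin 3 → ℝ) :=
  ContinuousLinearMap.pi ![ContinuousLinearMap.proj 0, ContinuousLinearMap.proj 1, 0]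

lemma bdryEmb_apply (q : Fin 2 → ℝ) : bdryEmb q = ![q 0, q 1, 0] := by
  funext i
  fin_cases i <;> rfl

lemma bdryEmb_mem_bdry (q : Fin 2 → ℝ) : bdryEmb q ∈ bdry 2 := rfl

lemma bdryEmb_single (i : Fin 2) : bdryEmb (Pi.single i 1) = Pi.single i.castSucc 1 := by
  rw [bdryEmb_apply]
  funext j
  fin_cases i <;> fin_cases j <;> rfl

section BoundaryTrace

variable {u : (Fin 3 → ℝ) → ℝ → Fin 3 → ℝ} {t : ℝ}

lemma bdryVort_eq_comp (j : Fin 3) :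
    (fun q => bdryVort u q t j) = fun q => curl3 (fun y => u y t) (bdryEmb q) j := by
  funext q
  rw [bdryEmb_apply]
  rfl

lemma pd_bdryVort (hv : ContDiff ℝ 3 (fun y => u y t)) (i : Fin 2) (j : Fin 3) :
    pd i (fun q => bdryVort u q t j) =
      fun q => pd i.castSucc (fun y => curl3 (fun z => u z t) y j) (bdryEmb q) := by
  rw [bdryVort_eq_comp]
  exact pd_comp_continuousLinearMap bdryEmb ((contDiff_curl3 hv j).differentiable two_ne_zero)
    (bdryEmb_single i)

lemma pd_pd_bdryVort (hv : ContDiff ℝ 3 (fun y => u y t)) (i i' : Fin 2) (j : Fin 3) :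
    pd i (pd i' (fun q => bdryVort u q t j)) =
      fun q =>
        pd i.castSucc (pd i'.castSucc (fun y => curl3 (fun z => u z t) y j)) (bdryEmb q) := by
  rw [pd_bdryVort hv]
  exact pd_comp_continuousLinearMap bdryEmb
    ((contDiff_pd (contDiff_curl3 hv j) (by norm_num) _ : ContDiff ℝ 1 _).differentiable
      one_ne_zero) (bdryEmb_single i)

lemma pd_bdryDiv_bdryVort (hv : ContDiff ℝ 3 (fun y => u y t)) (i : Fin 2) :
    pd i (fun q => pd 0 (fun r => bdryVort u r t 0) q + pd 1 (fun r => bdryVort u r t 1) q) =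
      fun q => pd i.castSucc (pd 0 (fun y => curl3 (fun z => u z t) y 0)) (bdryEmb q)
        + pd i.castSucc (pd 1 (fun y => curl3 (fun z => u z t) y 1)) (bdryEmb q) := by
  have hd (j k : Fin 3) : Differentiable ℝ (pd k (fun y => curl3 (fun z => u z t) y j)) :=
    (contDiff_pd (contDiff_curl3 hv j) (by norm_num) k : ContDiff ℝ 1 _).differentiable one_ne_zero
  rw [pd_bdryVort hv, pd_bdryVort hv]
  simp only [Fin.castSucc_zero, Fin.castSucc_one]
  rw [pd_comp_continuousLinearMap bdryEmb
      (g := fun y => pd 0 (fun y => curl3 (fun z => u z t) y 0) y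
        + pd 1 (fun y => curl3 (fun z => u z t) y 1) y)
      ((hd 0 0).add (hd 1 1)) (bdryEmb_single i),
    pd_add (hd 0 0) (hd 1 1)]

end BoundaryTrace

end BoundaryVorticity

open BoundaryVorticity

theorem boundary_vorticity_dynamics_3d_general
    (ν : ℝ)
    (u : (Fin 3 → ℝ) → ℝ → Fin 3 → ℝ)
    (G : (Fin 3 → ℝ) → ℝ → Fin 3 → ℝ)
    (hu_space : ∀ t : ℝ, 0 ≤ t → ContDiff ℝ 3 (fun x => u x t))
    (hdiv : ∀ x : Fin 3 → ℝ, 0 ≤ x 2 → ∀ t : ℝ, 0 ≤ t →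
      ∑ i : Fin 3, pd i (fun y => u y t i) x = 0)
    (hnoslip : ∀ x : Fin 3 → ℝ, x 2 = 0 → ∀ t : ℝ, 0 ≤ t → u x t = 0)
    (htransport : ∀ x : Fin 3 → ℝ, 0 ≤ x 2 → ∀ t : ℝ, 0 ≤ t → ∀ j : Fin 3,
      deriv (fun s => curl3 (fun z => u z s) x j) t
        + ∑ i : Fin 3, u x t i * pd i (fun y => curl3 (fun z => u z t) y j) x
        - ν * ∑ i : Fin 3, pd i (pd i (fun y => curl3 (fun z => u z t) y j)) x
        - ∑ i : Fin 3, curl3 (fun z => u z t) x i * pd i (fun y => u y t j) x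
        - G x t j = 0) :
    ∀ p : Fin 2 → ℝ, ∀ t : ℝ, 0 ≤ t →
      bdryVort u p t 2 = 0 ∧
      deriv (fun s => bdryVort u p s 0) t
        - 2 * ν * (pd 0 (pd 0 (fun q => bdryVort u q t 0)) p
            + pd 1 (pd 1 (fun q => bdryVort u q t 0)) p)
        + ν * pd 0 (fun q => pd 0 (fun r => bdryVort u r t 0) q
            + pd 1 (fun r => bdryVort u r t 1) q) p
        - ν * (-(pd 2 (pd 2 (pd 2 (fun y => u y t 1))) ![p 0, p 1, 0]))
        - G ![p 0, p 1, 0] t 0 = 0 ∧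
      deriv (fun s => bdryVort u p s 1) t
        - 2 * ν * (pd 0 (pd 0 (fun q => bdryVort u q t 1)) p
            + pd 1 (pd 1 (fun q => bdryVort u q t 1)) p)
        + ν * pd 1 (fun q => pd 0 (fun r => bdryVort u r t 0) q
            + pd 1 (fun r => bdryVort u r t 1) q) p
        + ν * (-(pd 2 (pd 2 (pd 2 (fun y => u y t 0))) ![p 0, p 1, 0]))
        - G ![p 0, p 1, 0] t 1 = 0 := by
  intro p t ht
  have hv := hu_space t ht
  have hns : EqOn (fun y => u y t) 0 (bdry 2) := fun y hy => hnoslip y hy t ht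
  have hdv : EqOn (divergence fun y => u y t) 0 (halfSpace 2) := fun y hy => hdiv y hy t ht
  have hx := bdryEmb_mem_bdry p
  have hT (j : Fin 3) := htransport (bdryEmb p) hx.ge t ht j
  simp only [hnoslip _ hx t ht, Pi.zero_apply, zero_mul, Finset.sum_const_zero, add_zero,
    vortex_stretching_eq_zero (hv.differentiable (by norm_num)) hns hx, sub_zero,
    Fin.sum_univ_three] at hT
  have hω0 := pd_two_pd_two_curl3_zero hv hdv hns hx
  have hω1 := pd_two_pd_two_curl3_one hv hdv hns hx
  simp only [pd_pd_bdryVort hv, pd_bdryDiv_bdryVort hv, Fin.castSucc_zero, Fin.castSucc_one]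
  simp only [bdryVort, ← bdryEmb_apply]
  refine ⟨curl3_two_eq_zero (hv.differentiable (by norm_num)) hns hx, ?_, ?_⟩
  · linear_combination hT 0 + ν * hω0
  · linear_combination hT 1 + ν * hω1

/-- main theorem, 3D: for a divergence-free velocity field `u` on the upper
half space, `C³` in space and `C¹` in time up to the boundary, obeying the no-slip
condition, and whose vorticity `ω = ∇ ∧ u` satisfies the transport equation
`∂ω/∂t + (u·∇)ω − νΔω − (ω·∇)u − G = 0` in the closed half space, the boundary
vorticity `θ = ω|_{∂D}` satisfies `θ³ = 0` and the dynamical equations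
`∂θ¹/∂t − 2νΔ_Γθ¹ + ν∂₁(∇^Γ·θ) − ν(∂³u²/∂𝛎³)|_{∂D} − ψ¹ = 0`,
`∂θ²/∂t − 2νΔ_Γθ² + ν∂₂(∇^Γ·θ) + ν(∂³u¹/∂𝛎³)|_{∂D} − ψ² = 0` on `∂D = ℝ²`,
where `∂/∂𝛎 = −∂/∂x₃` and `ψ = G|_{∂D}`: the effective viscosity is `2ν`, doubled. -/
theorem boundary_vorticity_dynamics_3d
    (ν : ℝ) (hν : 0 < ν)
    (u : (Fin 3 → ℝ) → ℝ → Fin 3 → ℝ)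
    (G : (Fin 3 → ℝ) → ℝ → Fin 3 → ℝ)
    (hu_space : ∀ t : ℝ, 0 ≤ t → ContDiff ℝ 3 (fun x => u x t))
    (hu_time : ∀ (x : Fin 3 → ℝ) (j : Fin 3),
      ContDiff ℝ 1 (fun t => curl3 (fun z => u z t) x j))
    (hdiv : ∀ x : Fin 3 → ℝ, 0 ≤ x 2 → ∀ t : ℝ, 0 ≤ t →
      ∑ i : Fin 3, pd i (fun y => u y t i) x = 0)
    (hnoslip : ∀ x : Fin 3 → ℝ, x 2 = 0 → ∀ t : ℝ, 0 ≤ t → u x t = 0)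
    (htransport : ∀ x : Fin 3 → ℝ, 0 ≤ x 2 → ∀ t : ℝ, 0 ≤ t → ∀ j : Fin 3,
      deriv (fun s => curl3 (fun z => u z s) x j) t
        + ∑ i : Fin 3, u x t i * pd i (fun y => curl3 (fun z => u z t) y j) x
        - ν * ∑ i : Fin 3, pd i (pd i (fun y => curl3 (fun z => u z t) y j)) x
        - ∑ i : Fin 3, curl3 (fun z => u z t) x i * pd i (fun y => u y t j) x
        - G x t j = 0) :
    ∀ p : Fin 2 → ℝ, ∀ t : ℝ, 0 ≤ t →
      bdryVort u p t 2 = 0 ∧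
      deriv (fun s => bdryVort u p s 0) t
        - 2 * ν * (pd 0 (pd 0 (fun q => bdryVort u q t 0)) p
            + pd 1 (pd 1 (fun q => bdryVort u q t 0)) p)
        + ν * pd 0 (fun q => pd 0 (fun r => bdryVort u r t 0) q
            + pd 1 (fun r => bdryVort u r t 1) q) p
        - ν * (-(pd 2 (pd 2 (pd 2 (fun y => u y t 1))) ![p 0, p 1, 0]))
        - G ![p 0, p 1, 0] t 0 = 0 ∧
      deriv (fun s => bdryVort u p s 1) t
        - 2 * ν * (pd 0 (pd 0 (fun q => bdryVort u q t 1)) p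
            + pd 1 (pd 1 (fun q => bdryVort u q t 1)) p)
        + ν * pd 1 (fun q => pd 0 (fun r => bdryVort u r t 0) q
            + pd 1 (fun r => bdryVort u r t 1) q) p
        + ν * (-(pd 2 (pd 2 (pd 2 (fun y => u y t 0))) ![p 0, p 1, 0]))
        - G ![p 0, p 1, 0] t 1 = 0 :=
  boundary_vorticity_dynamics_3d_general ν u G hu_space hdiv hnoslip htransport
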